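/- Every term graph has a bisimulation collapse, and the canonical bisimulation collapse of G is the minimum of the homomorphism preorder on the bisimilarity class of G: for every term graph G′ bisimilar to G there is a functional bisimulation from G′ to the canonical collapse of G. -/

import Mathlib

/-- A (root-connected) term graph over signature `Sig` with arity function `ar`,
    with vertex type `V`. -/
structure TermGraph (Sig : Type) (ar : Sig → ℕ) (V : Type) where
  lab : V → Sig
  args : V → List V
  root : V
  arity_ok : ∀ v, (args v).length = ar (lab v)
  rooted : ∀ v, Relation.ReflTransGen (fun a b => b ∈ args a) root v

/-- `R` is a bisimulation between term graphs `G₁` and `G₂`. -/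
def IsBisim {Sig : Type} {ar : Sig → ℕ} {V₁ V₂ : Type}
    (G₁ : TermGraph Sig ar V₁) (G₂ : TermGraph Sig ar V₂)
    (R : V₁ → V₂ → Prop) : Prop :=
  R G₁.root G₂.root ∧
  (∀ v w, R v w → G₁.lab v = G₂.lab w) ∧
  (∀ v w, R v w → List.Forall₂ R (G₁.args v) (G₂.args w))

/-- `G₁` and `G₂` are bisimilar. -/
def Bisim {Sig : Type} {ar : Sig → ℕ} {V₁ V₂ : Type}
    (G₁ : TermGraph Sig ar V₁) (G₂ : TermGraph Sig ar V₂) : Prop :=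
  ∃ R, IsBisim G₁ G₂ R

/-- `h` is a homomorphism of term graphs: it maps root to root, preserves labels,
    and commutes with the argument function. -/
def IsHom {Sig : Type} {ar : Sig → ℕ} {V₁ V₂ : Type}
    (G₁ : TermGraph Sig ar V₁) (G₂ : TermGraph Sig ar V₂) (h : V₁ → V₂) : Prop :=
  h G₁.root = G₂.root ∧
  (∀ v, G₂.lab (h v) = G₁.lab v) ∧
  (∀ v, G₂.args (h v) = (G₁.args v).map h)

/-- There exists a functional bisimulation (homomorphism) from `G₁` to `G₂`. -/
def FunBisim {Sig : Type} {ar : Sig → ℕ} {V₁ V₂ : Type}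
    (G₁ : TermGraph Sig ar V₁) (G₂ : TermGraph Sig ar V₂) : Prop :=
  ∃ h, IsHom G₁ G₂ h

/-- An isomorphism of term graphs is a bijective homomorphism. -/
def Iso {Sig : Type} {ar : Sig → ℕ} {V₁ V₂ : Type}
    (G₁ : TermGraph Sig ar V₁) (G₂ : TermGraph Sig ar V₂) : Prop :=
  ∃ h, IsHom G₁ G₂ h ∧ Function.Bijective h

/-- A bisimulation collapse of a term graph. -/
def IsCollapse {Sig : Type} {ar : Sig → ℕ} {V V₀ : Type}
    (G : TermGraph Sig ar V) (G₀ : TermGraph Sig ar V₀) : Prop :=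
  FunBisim G G₀ ∧
  ∀ (V' : Type) (G' : TermGraph Sig ar V'), FunBisim G₀ G' → Iso G' G₀

/-- The largest self-bisimulation on a term graph. -/
def MaxBisim {Sig : Type} {ar : Sig → ℕ} {V : Type} (G : TermGraph Sig ar V)
    (v w : V) : Prop :=
  ∃ R, IsBisim G G R ∧ R v w

/-- The canonical bisimulation collapse: the factor term graph by the largest
    self-bisimulation. -/
def InducedQuotient {Sig : Type} {ar : Sig → ℕ} {V : Type} (G : TermGraph Sig ar V)
    (Q : TermGraph Sig ar (Quot (MaxBisim G))) : Prop :=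
  Q.root = Quot.mk (MaxBisim G) G.root ∧
  (∀ v, Q.lab (Quot.mk (MaxBisim G) v) = G.lab v) ∧
  (∀ v, Q.args (Quot.mk (MaxBisim G) v) = (G.args v).map (Quot.mk (MaxBisim G)))

/-!
The largest self-bisimulation `~` of `G` is a bisimulation, so the quotient `G/~` is a term graph
and `Quot.mk` is a homomorphism onto it. Any homomorphism `h` out of `G/~` is surjective by
root-connectedness, and injective because the kernel of `h ∘ Quot.mk` is a self-bisimulation of
`G`, hence contained in `~`; its inverse is then a homomorphism, so `G/~` is a collapse. If `R`
is a bisimulation from `G'` to `G`, then relating `v'` to the classes of its `R`-partners is a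
bisimulation from `G'` to `G/~` which is single-valued, since `R⁻¹ ∘ R` is a self-bisimulation of
`G`; a single-valued bisimulation out of a root-connected graph is the graph of a homomorphism.
-/

namespace List

variable {α β γ : Type*}

theorem Forall₂.comp {R : α → β → Prop} {S : β → γ → Prop} {l₁ : List α} {l₂ : List β}
    {l₃ : List γ} (h₁ : Forall₂ R l₁ l₂) (h₂ : Forall₂ S l₂ l₃) :
    Forall₂ (Relation.Comp R S) l₁ l₃ := by
  induction h₁ generalizing l₃ with
  | nil => cases h₂; exact .nil
  | cons hab _ ih =>
    cases h₂ with
    | cons hbc h₂ => exact .cons ⟨_, hab, hbc⟩ (ih h₂)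

theorem Forall₂.exists_of_mem_left {R : α → β → Prop} {l₁ : List α} {l₂ : List β}
    (h : Forall₂ R l₁ l₂) {a : α} (ha : a ∈ l₁) : ∃ b ∈ l₂, R a b := by
  induction h with
  | nil => cases ha
  | cons hab _ ih =>
    rcases mem_cons.mp ha with rfl | ha
    · exact ⟨_, mem_cons_self, hab⟩
    · obtain ⟨b, hb, hab⟩ := ih ha
      exact ⟨b, mem_cons_of_mem _ hb, hab⟩

theorem map_eq_iff_forall₂ {f : α → β} {l₁ : List α} {l₂ : List β} :
    map f l₁ = l₂ ↔ Forall₂ (fun a b => f a = b) l₁ l₂ := by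
  rw [← forall₂_map_left_iff, forall₂_eq_eq_eq]

theorem map_eq_map_iff_forall₂ {f : α → γ} {g : β → γ} {l₁ : List α} {l₂ : List β} :
    map f l₁ = map g l₂ ↔ Forall₂ (fun a b => f a = g b) l₁ l₂ := by
  rw [map_eq_iff_forall₂, forall₂_map_right_iff]

end List

section Bisimulation

variable {Sig : Type} {ar : Sig → ℕ} {V₁ V₂ V₃ : Type} {G₁ : TermGraph Sig ar V₁}
  {G₂ : TermGraph Sig ar V₂} {G₃ : TermGraph Sig ar V₃}

theorem isBisim_eq (G : TermGraph Sig ar V₁) : IsBisim G G Eq :=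
  ⟨rfl, fun _ _ h => h ▸ rfl, fun _ _ h => h ▸ List.forall₂_eq_eq_eq ▸ rfl⟩

theorem IsBisim.flip {R : V₁ → V₂ → Prop} (hR : IsBisim G₁ G₂ R) :
    IsBisim G₂ G₁ (flip R) :=
  ⟨hR.1, fun v w h => (hR.2.1 w v h).symm, fun v w h => List.Forall₂.flip (hR.2.2 w v h)⟩

theorem IsBisim.comp {R : V₁ → V₂ → Prop} {S : V₂ → V₃ → Prop} (hR : IsBisim G₁ G₂ R)
    (hS : IsBisim G₂ G₃ S) : IsBisim G₁ G₃ (Relation.Comp R S) :=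
  ⟨⟨_, hR.1, hS.1⟩, fun _ _ ⟨_, h₁, h₂⟩ => (hR.2.1 _ _ h₁).trans (hS.2.1 _ _ h₂),
    fun _ _ ⟨_, h₁, h₂⟩ => (hR.2.2 _ _ h₁).comp (hS.2.2 _ _ h₂)⟩

theorem IsBisim.exists_right {R : V₁ → V₂ → Prop} (hR : IsBisim G₁ G₂ R) (v : V₁) :
    ∃ w, R v w := by
  induction G₁.rooted v with
  | refl => exact ⟨G₂.root, hR.1⟩
  | tail _ hmem ih =>
    obtain ⟨w, hw⟩ := ih
    obtain ⟨w', -, hw'⟩ := (hR.2.2 _ _ hw).exists_of_mem_left hmem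
    exact ⟨w', hw'⟩

theorem isBisim_graph_iff {h : V₁ → V₂} :
    IsBisim G₁ G₂ (fun v w => h v = w) ↔ IsHom G₁ G₂ h := by
  simp only [IsBisim, IsHom, forall_eq', eq_comm (b := G₁.lab _), eq_comm (a := G₂.args _),
    List.map_eq_iff_forall₂]

theorem IsBisim.funBisim_of_rightUnique {R : V₁ → V₂ → Prop} (hR : IsBisim G₁ G₂ R)
    (hu : Relator.RightUnique R) : FunBisim G₁ G₂ := by
  choose f hf using hR.exists_right
  have hgraph : (fun v w => f v = w) = R :=
    funext₂ fun v w => propext ⟨fun h => h ▸ hf v, hu (hf v)⟩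
  exact ⟨f, isBisim_graph_iff.mp (hgraph ▸ hR)⟩

theorem IsHom.comp {g : V₂ → V₃} {f : V₁ → V₂} (hg : IsHom G₂ G₃ g) (hf : IsHom G₁ G₂ f) :
    IsHom G₁ G₃ (g ∘ f) :=
  ⟨by simp only [Function.comp_apply, hf.1, hg.1],
    fun _ => by simp only [Function.comp_apply, hg.2.1, hf.2.1],
    fun _ => by simp only [Function.comp_apply, hg.2.2, hf.2.2, List.map_map]⟩

theorem IsHom.surjective {h : V₁ → V₂} (hh : IsHom G₁ G₂ h) : Function.Surjective h := by
  intro w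
  induction G₂.rooted w with
  | refl => exact ⟨G₁.root, hh.1⟩
  | tail _ hmem ih =>
    obtain ⟨v, rfl⟩ := ih
    rw [hh.2.2] at hmem
    obtain ⟨v', -, rfl⟩ := List.mem_map.mp hmem
    exact ⟨v', rfl⟩

theorem IsHom.isBisim_ker {h : V₁ → V₂} (hh : IsHom G₁ G₂ h) :
    IsBisim G₁ G₁ (fun v w => h v = h w) := by
  have hker := (isBisim_graph_iff.mpr hh).comp (isBisim_graph_iff.mpr hh).flip
  convert hker using 1
  exact funext₂ fun v w => propext ⟨fun e => ⟨_, e, rfl⟩, fun ⟨_, e₁, e₂⟩ => e₁.trans e₂.symm⟩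

theorem IsHom.inverse {h : V₁ → V₂} {g : V₂ → V₁} (hh : IsHom G₁ G₂ h)
    (hl : Function.LeftInverse g h) (hr : Function.RightInverse g h) : IsHom G₂ G₁ g := by
  have hgraph : flip (fun v w => h v = w) = fun w v => g w = v :=
    funext₂ fun w v => propext ⟨fun h => h ▸ hl v, fun h => h ▸ hr w⟩
  exact isBisim_graph_iff.mp (hgraph ▸ (isBisim_graph_iff.mpr hh).flip)

theorem IsHom.symm_iso_of_injective {h : V₁ → V₂} (hh : IsHom G₁ G₂ h)
    (hinj : Function.Injective h) : Iso G₂ G₁ := by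
  obtain ⟨g, hl, hr⟩ := Function.bijective_iff_has_inverse.mp ⟨hinj, hh.surjective⟩
  exact ⟨g, hh.inverse hl hr, Function.bijective_iff_has_inverse.mpr ⟨h, hr, hl⟩⟩

end Bisimulation

section Quotient

variable {Sig : Type} {ar : Sig → ℕ} {V : Type} {G : TermGraph Sig ar V}

theorem isBisim_maxBisim (G : TermGraph Sig ar V) : IsBisim G G (MaxBisim G) :=
  ⟨⟨Eq, isBisim_eq G, rfl⟩, fun _ _ ⟨_, hR, h⟩ => hR.2.1 _ _ h,
    fun _ _ ⟨R, hR, h⟩ => (hR.2.2 _ _ h).imp fun _ _ h => ⟨R, hR, h⟩⟩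

def canonQuot (G : TermGraph Sig ar V) : TermGraph Sig ar (Quot (MaxBisim G)) where
  lab := Quot.lift G.lab fun v w => (isBisim_maxBisim G).2.1 v w
  args := Quot.lift (fun v => (G.args v).map (Quot.mk _)) fun v w h =>
    List.map_eq_map_iff_forall₂.mpr (((isBisim_maxBisim G).2.2 v w h).imp fun _ _ => Quot.sound)
  root := Quot.mk _ G.root
  arity_ok := Quot.ind fun v => by simpa using G.arity_ok v
  rooted := Quot.ind fun v =>
    (G.rooted v).lift (Quot.mk _) fun _ _ hb => List.mem_map_of_mem hb

theorem inducedQuotient_canonQuot (G : TermGraph Sig ar V) : InducedQuotient G (canonQuot G) :=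
  ⟨rfl, fun _ => rfl, fun _ => rfl⟩

variable {Q : TermGraph Sig ar (Quot (MaxBisim G))}

theorem InducedQuotient.isHom_mk (hQ : InducedQuotient G Q) : IsHom G Q (Quot.mk _) :=
  ⟨hQ.1.symm, hQ.2.1, hQ.2.2⟩

theorem InducedQuotient.injective_of_isHom (hQ : InducedQuotient G Q) {V' : Type}
    {G' : TermGraph Sig ar V'} {h : Quot (MaxBisim G) → V'} (hh : IsHom Q G' h) :
    Function.Injective h := by
  rintro ⟨v⟩ ⟨w⟩ hvw
  exact Quot.sound ⟨_, (hh.comp hQ.isHom_mk).isBisim_ker, hvw⟩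

theorem InducedQuotient.isCollapse (hQ : InducedQuotient G Q) : IsCollapse G Q :=
  ⟨⟨_, hQ.isHom_mk⟩, fun _ _ ⟨_, hh⟩ => hh.symm_iso_of_injective (hQ.injective_of_isHom hh)⟩

theorem InducedQuotient.funBisim_of_isBisim (hQ : InducedQuotient G Q) {V' : Type}
    {G' : TermGraph Sig ar V'} {R : V' → V → Prop} (hR : IsBisim G' G R) : FunBisim G' Q := by
  refine (hR.comp (isBisim_graph_iff.mpr hQ.isHom_mk)).funBisim_of_rightUnique ?_
  rintro v' _ _ ⟨v, hv, rfl⟩ ⟨w, hw, rfl⟩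
  exact Quot.sound ⟨_, hR.flip.comp hR, v', hv, hw⟩

end Quotient

/-- Every term graph has a bisimulation collapse, and the canonical bisimulation
    collapse is the minimum of the homomorphism preorder on the bisimilarity class:
    every term graph bisimilar to the given one admits a functional bisimulation to
    the canonical collapse. -/
theorem collapse_exists_and_canonical_is_minimum {Sig : Type} {ar : Sig → ℕ}
    {V : Type} (G : TermGraph Sig ar V) :
    (∃ (V₀ : Type) (G₀ : TermGraph Sig ar V₀), IsCollapse G G₀) ∧
    (∀ Q : TermGraph Sig ar (Quot (MaxBisim G)), InducedQuotient G Q →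
      ∀ (V' : Type) (G' : TermGraph Sig ar V'), Bisim G' G → FunBisim G' Q) :=
  ⟨⟨_, canonQuot G, (inducedQuotient_canonQuot G).isCollapse⟩,
    fun _ hQ _ _ ⟨_, hR⟩ => hQ.funBisim_of_isBisim hR⟩
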